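/- On ℝ^{2n} with coordinate functionals dx_1, …, dx_{2n}, define ℂ-valued ℝ-linear functionals dz_α = δ_α dx_α + Σ_{k=1}^n τ_{αk} dx_{n+k} for α = 1, …, n, and let conj(dz_β) = δ_β dx_β + Σ_{k=1}^n conj(τ_{βk}) dx_{n+k}. Then, as ℂ-valued alternating 2-forms on ℝ^{2n}, (i/2) Σ_{α,β=1}^n W_{αβ} dz_α ∧ conj(dz_β) = Σ_{i=1}^n δ_i dx_i ∧ dx_{n+i}, where for linear functionals f, g the wedge is (f ∧ g)(u, w) = f(u)g(w) − f(w)g(u). -/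
import Mathlib

open scoped BigOperators
open Complex
section KahlerAux
open Matrix

/-- The `ℂ`-valued `ℝ`-linear functional `dz_α = δ_α dx_α + Σ_k τ_{αk} dx_{n+k}`
on `ℝ^{2n}`. -/
noncomputable def dzForm (n : ℕ) (Z : Matrix (Fin n) (Fin n) ℂ) (δ : Fin n → ℤ)
    (α : Fin n) (u : Fin (2 * n) → ℝ) : ℂ :=
  (δ α : ℂ) * (u ⟨α.1, by have := α.isLt; omega⟩ : ℝ)
    + ∑ k : Fin n, Z α k * (u ⟨n + k.1, by have := k.isLt; omega⟩ : ℝ)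

/-- The conjugate functional `conj(dz_β) = δ_β dx_β + Σ_k conj(τ_{βk}) dx_{n+k}`. -/
noncomputable def dzBarForm (n : ℕ) (Z : Matrix (Fin n) (Fin n) ℂ) (δ : Fin n → ℤ)
    (β : Fin n) (u : Fin (2 * n) → ℝ) : ℂ :=
  (δ β : ℂ) * (u ⟨β.1, by have := β.isLt; omega⟩ : ℝ)
    + ∑ k : Fin n, (starRingEnd ℂ) (Z β k) * (u ⟨n + k.1, by have := k.isLt; omega⟩ : ℝ)

/-- As alternating `2`-forms on `ℝ^{2n}` (evaluated on a pair of
vectors `u, w` via `(f ∧ g)(u,w) = f(u)g(w) − f(w)g(u)`), one has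
`(i/2) Σ_{α,β} W_{αβ} dz_α ∧ conj(dz_β) = Σ_i δ_i dx_i ∧ dx_{n+i}`. -/
theorem kahler_form_real_coords (n : ℕ) (hn : 1 ≤ n)
    (Z : Matrix (Fin n) (Fin n) ℂ)
    (hZsymm : ∀ α β, Z α β = Z β α)
    (hZpos : (Z.map Complex.im).PosDef)
    (W : Matrix (Fin n) (Fin n) ℝ) (hW : W = (Z.map Complex.im)⁻¹)
    (δ : Fin n → ℤ) (hδ : ∀ α, 0 < δ α)
    (u w : Fin (2 * n) → ℝ) :
    (Complex.I / 2) * ∑ α, ∑ β, (W α β : ℂ)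
        * (dzForm n Z δ α u * dzBarForm n Z δ β w
            - dzForm n Z δ α w * dzBarForm n Z δ β u)
      = ((∑ i : Fin n, (δ i : ℝ)
          * (u ⟨i.1, by have := i.isLt; omega⟩ * w ⟨n + i.1, by have := i.isLt; omega⟩
            - w ⟨i.1, by have := i.isLt; omega⟩ * u ⟨n + i.1, by have := i.isLt; omega⟩)
          : ℝ) : ℂ) := by
  classical
  set Y : Matrix (Fin n) (Fin n) ℝ := Z.map Complex.im with hYdef
  set Wc : Matrix (Fin n) (Fin n) ℂ := W.map Complex.ofRealHom with hWcdef
  set Yc : Matrix (Fin n) (Fin n) ℂ := Y.map Complex.ofRealHom with hYcdef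
  set D : Matrix (Fin n) (Fin n) ℂ := Matrix.diagonal (fun i => (δ i : ℂ)) with hDdef
  set Zb : Matrix (Fin n) (Fin n) ℂ := Z.map (starRingEnd ℂ) with hZbdef
  set x : Fin n → ℂ := fun i => ((u ⟨i.1, by have := i.isLt; omega⟩ : ℝ) : ℂ) with hxdef
  set x' : Fin n → ℂ := fun i => ((u ⟨n + i.1, by have := i.isLt; omega⟩ : ℝ) : ℂ) with hx'def
  set y : Fin n → ℂ := fun i => ((w ⟨i.1, by have := i.isLt; omega⟩ : ℝ) : ℂ) with hydef
  set y' : Fin n → ℂ := fun i => ((w ⟨n + i.1, by have := i.isLt; omega⟩ : ℝ) : ℂ) with hy'def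
  have hYunit : IsUnit Y.det := hZpos.det_pos.ne'.isUnit
  have hWY : W * Y = 1 := by rw [hW]; exact Matrix.nonsing_inv_mul Y hYunit
  have hYW : Y * W = 1 := by rw [hW]; exact Matrix.mul_nonsing_inv Y hYunit
  have hWcYc : Wc * Yc = 1 := by
    rw [hWcdef, hYcdef, ← Matrix.map_mul, hWY, Matrix.map_one _ (map_zero _) (map_one _)]
  have hYcWc : Yc * Wc = 1 := by
    rw [hWcdef, hYcdef, ← Matrix.map_mul, hYW, Matrix.map_one _ (map_zero _) (map_one _)]
  have hYsymm : Yᵀ = Y := by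
    ext a b; simp only [Matrix.transpose_apply, hYdef, Matrix.map_apply, hZsymm a b]
  have hWsymm : Wᵀ = W := by
    rw [hW, Matrix.transpose_nonsing_inv, hYsymm]
  have hWcT : Wcᵀ = Wc := by
    rw [hWcdef, ← Matrix.transpose_map, hWsymm]
  have hZT : Zᵀ = Z := by ext a b; simp only [Matrix.transpose_apply, hZsymm a b]
  have hZbT : Zbᵀ = Zb := by rw [hZbdef, ← Matrix.transpose_map, hZT]
  have hDT : Dᵀ = D := Matrix.diagonal_transpose _
  have hZb : Zb = Z - (2 * Complex.I) • Yc := by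
    ext a b
    simp only [hZbdef, Matrix.map_apply, Matrix.sub_apply, Matrix.smul_apply, hYcdef, hYdef,
      Complex.ofRealHom_eq_coe, smul_eq_mul]
    apply Complex.ext <;> simp <;> ring
  have dp_flip : ∀ (M : Matrix (Fin n) (Fin n) ℂ) (a c : Fin n → ℂ),
      a ⬝ᵥ (Mᵀ.mulVec c) = (M.mulVec a) ⬝ᵥ c := by
    intro M a c
    rw [Matrix.dotProduct_mulVec, Matrix.vecMul_transpose]
  have dp_tr : ∀ (M : Matrix (Fin n) (Fin n) ℂ) (a b : Fin n → ℂ),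
      a ⬝ᵥ (M.mulVec b) = b ⬝ᵥ (Mᵀ.mulVec a) := by
    intro M a b
    rw [dp_flip M b a, dotProduct_comm]
  have key : ∀ (M N : Matrix (Fin n) (Fin n) ℂ) (a b : Fin n → ℂ),
      (M.mulVec a) ⬝ᵥ (Wc.mulVec (N.mulVec b)) = a ⬝ᵥ ((Mᵀ * Wc * N).mulVec b) := by
    intro M N a b
    rw [Matrix.mulVec_mulVec, ← dp_flip M a, Matrix.mulVec_mulVec, Matrix.mul_assoc]
  have hdzu : ∀ α, dzForm n Z δ α u = (D.mulVec x + Z.mulVec x') α := by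
    intro α
    rw [hDdef, Pi.add_apply, Matrix.mulVec_diagonal]
    rfl
  have hdzw : ∀ α, dzForm n Z δ α w = (D.mulVec y + Z.mulVec y') α := by
    intro α
    rw [hDdef, Pi.add_apply, Matrix.mulVec_diagonal]
    rfl
  have hdzbw : ∀ β, dzBarForm n Z δ β w = (D.mulVec y + Zb.mulVec y') β := by
    intro β
    rw [hDdef, Pi.add_apply, Matrix.mulVec_diagonal]
    rfl
  have hdzbu : ∀ β, dzBarForm n Z δ β u = (D.mulVec x + Zb.mulVec x') β := by
    intro β
    rw [hDdef, Pi.add_apply, Matrix.mulVec_diagonal]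
    rfl
  have hsum : ∀ (A B : Fin n → ℂ), A ⬝ᵥ (Wc.mulVec B) = ∑ α, ∑ β, (W α β : ℂ) * (A α * B β) := by
    intro A B
    simp only [dotProduct, Matrix.mulVec, Finset.mul_sum]
    refine Finset.sum_congr rfl fun α _ => Finset.sum_congr rfl fun β _ => ?_
    rw [hWcdef]
    simp only [Matrix.map_apply, Complex.ofRealHom_eq_coe]
    ring
  have hS : (∑ α, ∑ β, (W α β : ℂ)
        * (dzForm n Z δ α u * dzBarForm n Z δ β w
            - dzForm n Z δ α w * dzBarForm n Z δ β u))
      = (D.mulVec x + Z.mulVec x') ⬝ᵥ (Wc.mulVec (D.mulVec y + Zb.mulVec y'))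
        - (D.mulVec y + Z.mulVec y') ⬝ᵥ (Wc.mulVec (D.mulVec x + Zb.mulVec x')) := by
    rw [hsum _ _, hsum _ _, ← Finset.sum_sub_distrib]
    refine Finset.sum_congr rfl fun α _ => ?_
    rw [← Finset.sum_sub_distrib]
    refine Finset.sum_congr rfl fun β _ => ?_
    rw [hdzu α, hdzw α, hdzbw β, hdzbu β]
    ring
  rw [hS]
  simp only [Matrix.mulVec_add, add_dotProduct, dotProduct_add, key]
  rw [hDT, hZT]
  have e1 : y ⬝ᵥ ((D * Wc * D).mulVec x) = x ⬝ᵥ ((D * Wc * D).mulVec y) := by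
    rw [dp_tr]
    congr 1
    rw [Matrix.transpose_mul, Matrix.transpose_mul, hDT, hWcT, Matrix.mul_assoc]
  have e2 : y' ⬝ᵥ ((Z * Wc * D).mulVec x) = x ⬝ᵥ ((D * Wc * Z).mulVec y') := by
    rw [dp_tr]
    congr 1
    rw [Matrix.transpose_mul, Matrix.transpose_mul, hDT, hWcT, hZT, Matrix.mul_assoc]
  have e3 : y ⬝ᵥ ((D * Wc * Zb).mulVec x') = x' ⬝ᵥ ((Zb * Wc * D).mulVec y) := by
    rw [dp_tr]
    congr 1
    rw [Matrix.transpose_mul, Matrix.transpose_mul, hDT, hWcT, hZbT, Matrix.mul_assoc]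
  have hA : ∀ M : Matrix (Fin n) (Fin n) ℂ, Yc * (Wc * M) = M := by
    intro M; rw [← Matrix.mul_assoc, hYcWc, Matrix.one_mul]
  have hB : ∀ M : Matrix (Fin n) (Fin n) ℂ, M * (Wc * Yc) = M := by
    intro M; rw [hWcYc, Matrix.mul_one]
  have hZWZb : Z * Wc * Zb = Zb * Wc * Z := by
    simp only [hZb, Matrix.mul_sub, Matrix.sub_mul, Matrix.mul_smul, Matrix.smul_mul,
      Matrix.mul_assoc, hA, hB]
  have e4 : y' ⬝ᵥ ((Z * Wc * Zb).mulVec x') = x' ⬝ᵥ ((Z * Wc * Zb).mulVec y') := by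
    rw [dp_tr]
    congr 1
    rw [Matrix.transpose_mul, Matrix.transpose_mul, hWcT, hZbT, hZT, ← Matrix.mul_assoc]
    rw [hZWZb]
  rw [e1, e2, e3, e4]
  have hDWZb : D * Wc * Zb = D * (Wc * Z) - (2 * Complex.I) • D := by
    simp only [hZb, Matrix.mul_sub, Matrix.mul_smul, Matrix.mul_assoc, hB]
  have hZbWD : Zb * Wc * D = Z * (Wc * D) - (2 * Complex.I) • D := by
    simp only [hZb, Matrix.sub_mul, Matrix.smul_mul, Matrix.mul_assoc, hA]
  have f1 : x ⬝ᵥ ((D * Wc * Zb).mulVec y')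
      = x ⬝ᵥ ((D * Wc * Z).mulVec y') - (2 * Complex.I) * (x ⬝ᵥ (D.mulVec y')) := by
    rw [hDWZb, Matrix.sub_mulVec, Matrix.smul_mulVec, dotProduct_sub,
      dotProduct_smul, smul_eq_mul, Matrix.mul_assoc]
  have f2 : x' ⬝ᵥ ((Zb * Wc * D).mulVec y)
      = x' ⬝ᵥ ((Z * Wc * D).mulVec y) - (2 * Complex.I) * (x' ⬝ᵥ (D.mulVec y)) := by
    rw [hZbWD, Matrix.sub_mulVec, Matrix.smul_mulVec, dotProduct_sub,
      dotProduct_smul, smul_eq_mul, Matrix.mul_assoc]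
  rw [f1, f2]
  have hPQ : x ⬝ᵥ (D.mulVec y') - x' ⬝ᵥ (D.mulVec y)
      = ((∑ i : Fin n, (δ i : ℝ)
          * (u ⟨i.1, by have := i.isLt; omega⟩ * w ⟨n + i.1, by have := i.isLt; omega⟩
            - w ⟨i.1, by have := i.isLt; omega⟩ * u ⟨n + i.1, by have := i.isLt; omega⟩)
          : ℝ) : ℂ) := by
    push_cast
    simp only [dotProduct, Matrix.mulVec_diagonal, hDdef, ← Finset.sum_sub_distrib]
    refine Finset.sum_congr rfl fun i _ => ?_
    simp only [hxdef, hx'def, hydef, hy'def]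
    push_cast
    ring
  linear_combination hPQ + (x' ⬝ᵥ (D.mulVec y) - x ⬝ᵥ (D.mulVec y')) * Complex.I_sq

end KahlerAux
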